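/- Let I ≥ 2 and let f_i : (0,1] → ℝ (i = 1,…,I) be differentiable and strictly increasing with f_i(1) finite, lim_{q→0⁺} f_i(q) = −∞, and f_i integrable near 0; set A_i(p) = ∫₀^p f_i(s) ds, α(q) = Σ_i A_i(q_i) on the probability simplex Θ_I, and ρ(x) = sup_{q ∈ Θ_I} { −qᵀx − α(q) }. Then ρ is strictly convex for non-equivalent wealth vectors: whenever x₁, x₂ ∈ ℝ^I are such that x₁ − x₂ is not a scalar multiple of the all-ones vector e, one has ρ(τ·x₁ + (1−τ)·x₂) < τ·ρ(x₁) + (1−τ)·ρ(x₂) for every τ ∈ (0,1). -/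

import Mathlib

/-!
The supremum defining `ρ(x)` is attained on the compact simplex, and since `f_i → -∞` at `0`
every maximiser `q` is interior: moving a little mass onto a coordinate with `q_i = 0` gains
more in penalty than it costs. At an interior maximiser the first-order conditions say that
`f_i(q_i) + x_i` does not depend on `i`. The objective is affine in `x`, so a maximiser `q` for
`τ x₁ + (1 - τ) x₂` gives `ρ(τ x₁ + (1 - τ) x₂) ≤ τ ρ(x₁) + (1 - τ) ρ(x₂)`, with equality only
if `q` maximises for `x₁` and for `x₂` as well; the first-order conditions for both then force
`x₁ - x₂` to be constant.
-/

/-- The probability simplex in `ℝ^I`. -/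
def simplex (I : ℕ) : Set (Fin I → ℝ) := {q | (∀ i, 0 ≤ q i) ∧ ∑ i, q i = 1}

/-- `penaltyA f p = ∫₀^p f(s) ds`. -/
noncomputable def penaltyA (f : ℝ → ℝ) (p : ℝ) : ℝ := ∫ s in (0 : ℝ)..p, f s

/-- The risk measure `ρ(x) = sup_{q ∈ Θ_I} { -qᵀx - Σᵢ ∫₀^{qᵢ} fᵢ }`. -/
noncomputable def rho (I : ℕ) (f : Fin I → ℝ → ℝ) (x : Fin I → ℝ) : ℝ :=
  sSup {v : ℝ | ∃ q ∈ simplex I, v = -(∑ i, q i * x i) - ∑ i, penaltyA (f i) (q i)}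

open MeasureTheory Set Filter Topology

section Integral

variable {g : ℝ → ℝ}

theorem IntervalIntegrable.mono_of_mem_Icc {a b c d : ℝ} (h : IntervalIntegrable g volume c d)
    (hcd : c ≤ d) (ha : a ∈ Icc c d) (hb : b ∈ Icc c d) : IntervalIntegrable g volume a b :=
  h.mono_set (uIcc_subset_uIcc (by rwa [uIcc_of_le hcd]) (by rwa [uIcc_of_le hcd]))

theorem integral_le_mul_of_monotoneOn {a b : ℝ} (hab : a ≤ b) (hg : MonotoneOn g (Ioc a b))
    (hint : IntervalIntegrable g volume a b) : ∫ s in a..b, g s ≤ (b - a) * g b :=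
  calc ∫ s in a..b, g s ≤ ∫ _ in a..b, g b :=
        intervalIntegral.integral_mono_on_of_le_Ioo hab hint intervalIntegrable_const
          fun s hs => hg (Ioo_subset_Ioc_self hs) (right_mem_Ioc.2 (hs.1.trans hs.2)) hs.2.le
    _ = (b - a) * g b := by simp

theorem mul_le_integral_of_monotoneOn {a b : ℝ} (hab : a ≤ b) (hg : MonotoneOn g (Icc a b))
    (hint : IntervalIntegrable g volume a b) : (b - a) * g a ≤ ∫ s in a..b, g s :=
  calc (b - a) * g a = ∫ _ in a..b, g a := by simp
    _ ≤ ∫ s in a..b, g s :=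
        intervalIntegral.integral_mono_on hab intervalIntegrable_const hint
          fun s hs => hg (left_mem_Icc.2 hab) hs hs.1

theorem penaltyA_sub_penaltyA {a b : ℝ} (ha : IntervalIntegrable g volume 0 a)
    (hb : IntervalIntegrable g volume 0 b) : penaltyA g b - penaltyA g a = ∫ s in a..b, g s :=
  intervalIntegral.integral_interval_sub_left hb ha

theorem continuousOn_penaltyA (h : IntervalIntegrable g volume 0 1) :
    ContinuousOn (penaltyA g) (Icc 0 1) := by
  unfold penaltyA
  simpa [uIcc_of_le zero_le_one] using
    intervalIntegral.continuousOn_primitive_interval' h (left_mem_uIcc (a := (0 : ℝ)) (b := 1))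

theorem hasDerivAt_penaltyA {p : ℝ} {U : Set ℝ} (hint : IntervalIntegrable g volume 0 p)
    (hU : IsOpen U) (hp : p ∈ U) (hg : ContinuousOn g U) :
    HasDerivAt (penaltyA g) (g p) p :=
  intervalIntegral.integral_hasDerivAt_right hint (hg.stronglyMeasurableAtFilter hU p hp)
    (hg.continuousAt (hU.mem_nhds hp))

end Integral

section Transfer

variable {ι : Type*} [DecidableEq ι]

def transfer (q : ι → ℝ) (i j : ι) (t : ℝ) : ι → ℝ := q + t • (Pi.single i 1 - Pi.single j 1)

variable {q : ι → ℝ} {i j : ι} {t : ℝ}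

@[simp]
theorem transfer_zero : transfer q i j 0 = q := by simp [transfer]

theorem transfer_apply_left (hij : i ≠ j) : transfer q i j t i = q i + t := by
  simp [transfer, hij]

theorem transfer_apply_right (hij : i ≠ j) : transfer q i j t j = q j - t := by
  simp [transfer, hij.symm, sub_eq_add_neg]

theorem transfer_apply_of_ne {k : ι} (hki : k ≠ i) (hkj : k ≠ j) : transfer q i j t k = q k := by
  simp [transfer, hki, hkj]

variable [Fintype ι]

theorem sum_transfer (g : ι → ℝ → ℝ) (hij : i ≠ j) :
    ∑ k, g k (transfer q i j t k) =
      ∑ k, g k (q k) + (g i (q i + t) - g i (q i)) + (g j (q j - t) - g j (q j)) := by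
  have hΔ : ∑ k, (g k (transfer q i j t k) - g k (q k)) =
      (g i (q i + t) - g i (q i)) + (g j (q j - t) - g j (q j)) := by
    rw [Fintype.sum_eq_add i j hij fun k hk => by rw [transfer_apply_of_ne hk.1 hk.2, sub_self],
      transfer_apply_left hij, transfer_apply_right hij]
  rw [Finset.sum_sub_distrib] at hΔ
  linarith

theorem transfer_mem_stdSimplex (hq : q ∈ stdSimplex ℝ ι) (hij : i ≠ j) (hi : 0 ≤ q i + t)
    (hj : 0 ≤ q j - t) : transfer q i j t ∈ stdSimplex ℝ ι := by
  refine ⟨fun k => ?_, ?_⟩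
  · rcases eq_or_ne k i with rfl | hki
    · rwa [transfer_apply_left hij]
    rcases eq_or_ne k j with rfl | hkj
    · rwa [transfer_apply_right hij]
    rw [transfer_apply_of_ne hki hkj]
    exact hq.1 k
  · rw [sum_transfer (fun _ p => p) hij, hq.2]
    ring

end Transfer

section Objective

variable {ι : Type*} [Fintype ι] {f : ι → ℝ → ℝ}

noncomputable def rhoObjective (f : ι → ℝ → ℝ) (x q : ι → ℝ) : ℝ :=
  -(∑ i, q i * x i) - ∑ i, penaltyA (f i) (q i)

theorem rhoObjective_smul_add_one_sub_smul (x₁ x₂ q : ι → ℝ) (τ : ℝ) :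
    rhoObjective f (τ • x₁ + (1 - τ) • x₂) q =
      τ * rhoObjective f x₁ q + (1 - τ) * rhoObjective f x₂ q := by
  have hlin : ∑ k, q k * (τ • x₁ + (1 - τ) • x₂) k =
      τ * ∑ k, q k * x₁ k + (1 - τ) * ∑ k, q k * x₂ k := by
    simp only [Finset.mul_sum, ← Finset.sum_add_distrib, Pi.add_apply, Pi.smul_apply, smul_eq_mul]
    exact Finset.sum_congr rfl fun k _ => by ring
  rw [rhoObjective, rhoObjective, rhoObjective, hlin]
  ring

theorem continuousOn_rhoObjective (hint : ∀ i, IntervalIntegrable (f i) volume 0 1)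
    (x : ι → ℝ) : ContinuousOn (rhoObjective f x) (stdSimplex ℝ ι) := by
  refine (continuousOn_finsetSum _ fun i _ => ?_).neg.sub (continuousOn_finsetSum _ fun i _ => ?_)
  · fun_prop
  · exact (continuousOn_penaltyA (hint i)).comp (continuous_apply i).continuousOn
      fun q hq => mem_Icc_of_mem_stdSimplex hq i

theorem lt_one_of_mem_stdSimplex {q : ι → ℝ} (hq : q ∈ stdSimplex ℝ ι) {i j : ι} (hij : i ≠ j)
    (hj : 0 < q j) : q i < 1 := by
  have := Finset.add_le_sum (fun k _ => hq.1 k) (Finset.mem_univ i) (Finset.mem_univ j) hij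
  linarith [hq.2]

theorem rhoObjective_transfer [DecidableEq ι] (x q : ι → ℝ) {i j : ι} (t : ℝ) (hij : i ≠ j) :
    rhoObjective f x (transfer q i j t) = rhoObjective f x q - t * (x i - x j)
      - (penaltyA (f i) (q i + t) - penaltyA (f i) (q i))
      - (penaltyA (f j) (q j - t) - penaltyA (f j) (q j)) := by
  rw [rhoObjective, rhoObjective, sum_transfer (fun k p => p * x k) hij,
    sum_transfer (fun k p => penaltyA (f k) p) hij]
  ring

theorem pos_of_isMaxOn_rhoObjective (hmono : ∀ i, MonotoneOn (f i) (Ioc 0 1))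
    (hlim : ∀ i, Tendsto (f i) (𝓝[>] 0) atBot) (hint : ∀ i, IntervalIntegrable (f i) volume 0 1)
    {x q : ι → ℝ} (hq : q ∈ stdSimplex ℝ ι)
    (hmax : IsMaxOn (rhoObjective f x) (stdSimplex ℝ ι) q) (i : ι) : 0 < q i := by
  classical
  refine (hq.1 i).lt_of_ne' fun hi => ?_
  obtain ⟨j, hj⟩ : ∃ j, 0 < q j := by
    by_contra! h
    linarith [Finset.sum_nonpos (s := Finset.univ) fun k _ => h k, hq.2]
  have hij : i ≠ j := by rintro rfl; linarith
  have hqj : q j ≤ 1 := (mem_Icc_of_mem_stdSimplex hq j).2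
  obtain ⟨ε, hfε, hε₀, hεj⟩ : ∃ ε, f i ε < x j - x i + f j (q j / 2) ∧ 0 < ε ∧ ε < q j / 2 :=
    (((hlim i).eventually (eventually_lt_atBot _)).and (Ioo_mem_nhdsGT (half_pos hj))).exists
  have hle := hmax (transfer_mem_stdSimplex hq hij (t := ε) (by linarith) (by linarith))
  rw [mem_ofPred_eq, rhoObjective_transfer x q ε hij] at hle
  have hAi : penaltyA (f i) (q i + ε) - penaltyA (f i) (q i) ≤ ε * f i ε := by
    rw [hi, zero_add, penaltyA, penaltyA, intervalIntegral.integral_same, sub_zero]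
    simpa using integral_le_mul_of_monotoneOn hε₀.le
      ((hmono i).mono (Ioc_subset_Ioc_right (by linarith)))
      ((hint i).mono_of_mem_Icc zero_le_one ⟨le_rfl, zero_le_one⟩ ⟨hε₀.le, by linarith⟩)
  have hAj : ε * f j (q j / 2) ≤ penaltyA (f j) (q j) - penaltyA (f j) (q j - ε) := by
    have hsub : q j - ε ∈ Icc (0 : ℝ) 1 := ⟨by linarith, by linarith⟩
    rw [penaltyA_sub_penaltyA ((hint j).mono_of_mem_Icc zero_le_one ⟨le_rfl, zero_le_one⟩ hsub)
      ((hint j).mono_of_mem_Icc zero_le_one ⟨le_rfl, zero_le_one⟩ ⟨hj.le, hqj⟩)]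
    calc ε * f j (q j / 2) ≤ (q j - (q j - ε)) * f j (q j - ε) := by
          rw [sub_sub_cancel]
          exact mul_le_mul_of_nonneg_left
            (hmono j ⟨by linarith, by linarith⟩ ⟨by linarith, by linarith⟩ (by linarith)) hε₀.le
      _ ≤ ∫ s in (q j - ε)..(q j), f j s :=
          mul_le_integral_of_monotoneOn (by linarith)
            ((hmono j).mono (Icc_subset_Ioc (by linarith) hqj))
            ((hint j).mono_of_mem_Icc zero_le_one hsub ⟨hj.le, hqj⟩)
  -- moving `ε` from `j` to `i` strictly increases the objective
  nlinarith [mul_pos hε₀ (sub_pos.2 hfε)]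

theorem add_eq_add_of_isMaxOn_rhoObjective (hcont : ∀ i, ContinuousOn (f i) (Ioo 0 1))
    (hint : ∀ i, IntervalIntegrable (f i) volume 0 1) {x q : ι → ℝ} (hq : q ∈ stdSimplex ℝ ι)
    (hmax : IsMaxOn (rhoObjective f x) (stdSimplex ℝ ι) q) {i j : ι} (hij : i ≠ j)
    (hi : 0 < q i) (hj : 0 < q j) : f i (q i) + x i = f j (q j) + x j := by
  classical
  have hA : ∀ k, 0 < q k → q k < 1 → HasDerivAt (penaltyA (f k)) (f k (q k)) (q k) :=
    fun k hk₀ hk₁ => hasDerivAt_penaltyA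
      ((hint k).mono_of_mem_Icc zero_le_one ⟨le_rfl, zero_le_one⟩ ⟨hk₀.le, hk₁.le⟩)
      isOpen_Ioo ⟨hk₀, hk₁⟩ (hcont k)
  have hAi : HasDerivAt (fun t => penaltyA (f i) (q i + t)) (f i (q i)) 0 :=
    HasDerivAt.comp_const_add _ _ (by
      rw [add_zero]; exact hA i hi (lt_one_of_mem_stdSimplex hq hij hj))
  have hAj : HasDerivAt (fun t => penaltyA (f j) (q j - t)) (-f j (q j)) 0 :=
    HasDerivAt.comp_const_sub _ _ (by
      rw [sub_zero]; exact hA j hj (lt_one_of_mem_stdSimplex hq hij.symm hi))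
  set φ : ℝ → ℝ := fun t => rhoObjective f x (transfer q i j t)
  have hφ : HasDerivAt φ (-(x i - x j) - f i (q i) + f j (q j)) 0 := by
    have hφ_eq : φ = fun t => rhoObjective f x q - t * (x i - x j)
        - (penaltyA (f i) (q i + t) - penaltyA (f i) (q i))
        - (penaltyA (f j) (q j - t) - penaltyA (f j) (q j)) :=
      funext fun t => rhoObjective_transfer x q t hij
    rw [hφ_eq]
    exact ((((hasDerivAt_const 0 (rhoObjective f x q)).sub
      (hasDerivAt_mul_const (x i - x j))).sub (hAi.sub_const _)).sub
        (hAj.sub_const _)).congr_deriv (by ring)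
  have hφmax : IsLocalMax φ 0 := by
    filter_upwards [Icc_mem_nhds (neg_lt_zero.2 hi) hj] with t ht
    simpa [φ] using
      hmax (transfer_mem_stdSimplex hq hij (by linarith [ht.1]) (by linarith [ht.2]))
  linarith [hφmax.hasDerivAt_eq_zero hφ]

theorem exists_eq_smul_one_of_isMaxOn_rhoObjective [Nonempty ι]
    (hcont : ∀ i, ContinuousOn (f i) (Ioo 0 1)) (hint : ∀ i, IntervalIntegrable (f i) volume 0 1)
    {x₁ x₂ q : ι → ℝ} (hq : q ∈ stdSimplex ℝ ι) (hpos : ∀ i, 0 < q i)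
    (hmax₁ : IsMaxOn (rhoObjective f x₁) (stdSimplex ℝ ι) q)
    (hmax₂ : IsMaxOn (rhoObjective f x₂) (stdSimplex ℝ ι) q) :
    ∃ t : ℝ, x₁ - x₂ = t • (1 : ι → ℝ) := by
  obtain ⟨j⟩ := ‹Nonempty ι›
  refine ⟨x₁ j - x₂ j, funext fun i => ?_⟩
  rcases eq_or_ne i j with rfl | hij
  · simp
  have h₁ := add_eq_add_of_isMaxOn_rhoObjective hcont hint hq hmax₁ hij (hpos i) (hpos j)
  have h₂ := add_eq_add_of_isMaxOn_rhoObjective hcont hint hq hmax₂ hij (hpos i) (hpos j)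
  simp only [Pi.sub_apply, Pi.smul_apply, Pi.one_apply, smul_eq_mul, mul_one]
  linarith

end Objective

section Rho

variable {I : ℕ} {f : Fin I → ℝ → ℝ}

theorem rho_eq_sSup_image (x : Fin I → ℝ) :
    rho I f x = sSup (rhoObjective f x '' stdSimplex ℝ (Fin I)) := by
  simp only [rho, rhoObjective, image, eq_comm]
  rfl

theorem rhoObjective_le_rho (hint : ∀ i, IntervalIntegrable (f i) volume 0 1) (x : Fin I → ℝ)
    {q : Fin I → ℝ} (hq : q ∈ stdSimplex ℝ (Fin I)) : rhoObjective f x q ≤ rho I f x := by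
  rw [rho_eq_sSup_image]
  exact le_csSup ((isCompact_stdSimplex ℝ (Fin I)).bddAbove_image
    (continuousOn_rhoObjective hint x)) (mem_image_of_mem _ hq)

theorem isMaxOn_of_rho_le (hint : ∀ i, IntervalIntegrable (f i) volume 0 1) {x q : Fin I → ℝ}
    (h : rho I f x ≤ rhoObjective f x q) : IsMaxOn (rhoObjective f x) (stdSimplex ℝ (Fin I)) q :=
  fun _ hq' => (rhoObjective_le_rho hint x hq').trans h

theorem exists_rho_eq_rhoObjective [Nonempty (Fin I)]
    (hint : ∀ i, IntervalIntegrable (f i) volume 0 1) (x : Fin I → ℝ) :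
    ∃ q ∈ stdSimplex ℝ (Fin I), rho I f x = rhoObjective f x q ∧
      IsMaxOn (rhoObjective f x) (stdSimplex ℝ (Fin I)) q := by
  obtain ⟨q, hq, hsup, hmax⟩ := (isCompact_stdSimplex ℝ (Fin I)).exists_sSup_image_eq_and_ge
    ⟨_, single_mem_stdSimplex ℝ (Classical.arbitrary (Fin I))⟩ (continuousOn_rhoObjective hint x)
  exact ⟨q, hq, (rho_eq_sSup_image x).trans hsup, hmax⟩

end Rho

theorem stmt_10_general (I : ℕ) (f : Fin I → ℝ → ℝ)
    (hdiff : ∀ i, DifferentiableOn ℝ (f i) (Set.Ioc (0 : ℝ) 1))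
    (hmono : ∀ i, StrictMonoOn (f i) (Set.Ioc (0 : ℝ) 1))
    (hlim : ∀ i, Filter.Tendsto (f i) (nhdsWithin 0 (Set.Ioi 0)) Filter.atBot)
    (hint : ∀ i, ∀ p ∈ Set.Icc (0 : ℝ) 1, IntervalIntegrable (f i) MeasureTheory.volume 0 p) :
    ∀ x₁ x₂ : Fin I → ℝ, (¬ ∃ t : ℝ, x₁ - x₂ = t • (1 : Fin I → ℝ)) →
      ∀ τ : ℝ, 0 < τ → τ < 1 →
        rho I f (τ • x₁ + (1 - τ) • x₂) < τ * rho I f x₁ + (1 - τ) * rho I f x₂ := by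
  intro x₁ x₂ hne τ hτ₀ hτ₁
  have hint₁ i : IntervalIntegrable (f i) volume 0 1 := hint i 1 ⟨zero_le_one, le_rfl⟩
  have hcont i : ContinuousOn (f i) (Ioo 0 1) := (hdiff i).continuousOn.mono Ioo_subset_Ioc_self
  have : Nonempty (Fin I) := by
    rcases I with _ | I
    · exact absurd ⟨0, Subsingleton.elim _ _⟩ hne
    · infer_instance
  obtain ⟨q, hq, hρ, hmax⟩ := exists_rho_eq_rhoObjective hint₁ (τ • x₁ + (1 - τ) • x₂)
  have hpos := pos_of_isMaxOn_rhoObjective (fun i => (hmono i).monotoneOn) hlim hint₁ hq hmax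
  have h₁ := rhoObjective_le_rho hint₁ x₁ hq
  have h₂ := rhoObjective_le_rho hint₁ x₂ hq
  rw [hρ, rhoObjective_smul_add_one_sub_smul]
  by_contra! hge
  -- equality in the convex combination forces `q` to be a maximiser for `x₁` and for `x₂`
  have e₁ : rho I f x₁ ≤ rhoObjective f x₁ q := by nlinarith
  have e₂ : rho I f x₂ ≤ rhoObjective f x₂ q := by nlinarith
  exact hne (exists_eq_smul_one_of_isMaxOn_rhoObjective hcont hint₁ hq hpos
    (isMaxOn_of_rho_le hint₁ e₁) (isMaxOn_of_rho_le hint₁ e₂))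

/-- The risk measure `ρ` is strictly convex for non-equivalent wealth
vectors. -/
theorem stmt_10 (I : ℕ) (hI : 2 ≤ I) (f : Fin I → ℝ → ℝ)
    (hdiff : ∀ i, DifferentiableOn ℝ (f i) (Set.Ioc (0 : ℝ) 1))
    (hmono : ∀ i, StrictMonoOn (f i) (Set.Ioc (0 : ℝ) 1))
    (hlim : ∀ i, Filter.Tendsto (f i) (nhdsWithin 0 (Set.Ioi 0)) Filter.atBot)
    (hint : ∀ i, ∀ p ∈ Set.Icc (0 : ℝ) 1, IntervalIntegrable (f i) MeasureTheory.volume 0 p) :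
    ∀ x₁ x₂ : Fin I → ℝ, (¬ ∃ t : ℝ, x₁ - x₂ = t • (1 : Fin I → ℝ)) →
      ∀ τ : ℝ, 0 < τ → τ < 1 →
        rho I f (τ • x₁ + (1 - τ) • x₂) < τ * rho I f x₁ + (1 - τ) * rho I f x₂ :=
  stmt_10_general I f hdiff hmono hlim hint
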